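/- arXiv:1701.00335 — 2 statements merged into one kernel-verified Lean document; each statement's English description precedes it below -/
import Mathlib

section
/- Fix β > 0 and let X̄_β^P be a random variable with distribution π_β^P, i.e. P(X̄_β^P = x) = ξ_β(x) − ξ_β(x+1) for x ∈ ℕ. Then the second moment is finite and satisfies E((X̄_β^P)²) = ∑_{x=0}^∞ x²·(ξ_β(x) − ξ_β(x+1)) ≤ 2β·(β+2). -/
/-!
Summation by parts turns the partial second moment into `∑ (2x+1) ξ(x+1)`, which the relation
`ξ(x+1) = β (ξ(x)² − ξ(x+1)²)` rewrites as `β ∑ (2x+1)(ξ(x)² − ξ(x+1)²)`. A second summation by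
parts bounds this by `β (1 + 2 ∑ ξ(x+1)²) ≤ β (1 + 2 ∑ ξ(x+1))`, and telescoping the same relation
gives `∑ ξ(x+1) = β (1 − ξ(n)²) ≤ β`. All partial sums are therefore at most `β (2β + 1)`.
-/

/-- The tail sequence of the invariant distribution `π_β^P` of the mean-field limit
of the Power of Choice policy: `ξ_β(0) = 1` and
`ξ_β(x+1) = (−1 + √(1 + 4β²ξ_β(x)²))/(2β)`. -/
noncomputable def xi (β : ℝ) : ℕ → ℝ
  | 0 => 1
  | x + 1 => (-1 + Real.sqrt (1 + 4 * β ^ 2 * (xi β x) ^ 2)) / (2 * β)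

open Finset

theorem Finset.sum_range_mul_sub_succ_add {R : Type*} [CommRing R] (g a : ℕ → R) (n : ℕ) :
    ∑ x ∈ range n, g x * (a x - a (x + 1)) + g n * a n =
      g 0 * a 0 + ∑ x ∈ range n, (g (x + 1) - g x) * a (x + 1) := by
  induction n with
  | zero => simp
  | succ n ih =>
    rw [sum_range_succ, sum_range_succ]
    linear_combination ih

@[simp]
theorem xi_zero (β : ℝ) : xi β 0 = 1 := rfl

section

variable {β : ℝ}

theorem xi_pos (hβ : 0 < β) (x : ℕ) : 0 < xi β x := by
  induction x with
  | zero => simp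
  | succ n ih =>
    have : 1 < Real.sqrt (1 + 4 * β ^ 2 * xi β n ^ 2) :=
      (Real.lt_sqrt zero_le_one).2 (by nlinarith [mul_pos (pow_pos hβ 2) (pow_pos ih 2)])
    exact div_pos (by linarith) (by positivity)

theorem xi_succ_eq (hβ : 0 < β) (x : ℕ) :
    xi β (x + 1) = β * (xi β x ^ 2 - xi β (x + 1) ^ 2) := by
  have hs : Real.sqrt (1 + 4 * β ^ 2 * xi β x ^ 2) ^ 2 = 1 + 4 * β ^ 2 * xi β x ^ 2 :=
    Real.sq_sqrt (by positivity)
  rw [xi]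
  field_simp
  linear_combination hs

theorem xi_succ_lt (hβ : 0 < β) (x : ℕ) : xi β (x + 1) < xi β x := by
  have hsq : xi β (x + 1) ^ 2 < xi β x ^ 2 := by
    nlinarith [xi_succ_eq hβ x, xi_pos hβ (x + 1)]
  exact lt_of_pow_lt_pow_left₀ 2 (xi_pos hβ x).le hsq

theorem xi_le_one (hβ : 0 < β) (x : ℕ) : xi β x ≤ 1 := by
  induction x with
  | zero => simp
  | succ n ih => exact (xi_succ_lt hβ n).le.trans ih

theorem sum_range_xi_succ_le (hβ : 0 < β) (n : ℕ) : ∑ x ∈ range n, xi β (x + 1) ≤ β := by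
  calc ∑ x ∈ range n, xi β (x + 1)
      = β * (1 - xi β n ^ 2) := by
        rw [sum_congr rfl fun x _ => xi_succ_eq hβ x, ← mul_sum,
          sum_range_sub' (fun x => xi β x ^ 2), xi_zero, one_pow]
    _ ≤ β := mul_le_of_le_one_right hβ.le (sub_le_self _ (sq_nonneg _))

theorem sum_range_sq_mul_xi_sub_le (hβ : 0 < β) (n : ℕ) :
    ∑ x ∈ range n, (x : ℝ) ^ 2 * (xi β x - xi β (x + 1)) ≤ β * (2 * β + 1) := by
  calc ∑ x ∈ range n, (x : ℝ) ^ 2 * (xi β x - xi β (x + 1))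
      ≤ ∑ x ∈ range n, (x : ℝ) ^ 2 * (xi β x - xi β (x + 1)) + (n : ℝ) ^ 2 * xi β n :=
        le_add_of_nonneg_right (mul_nonneg (sq_nonneg _) (xi_pos hβ n).le)
    _ = ∑ x ∈ range n, (2 * (x : ℝ) + 1) * xi β (x + 1) := by
        rw [sum_range_mul_sub_succ_add (fun x : ℕ => (x : ℝ) ^ 2)]
        simp only [Nat.cast_zero, Nat.cast_succ]
        ring_nf
    _ = β * ∑ x ∈ range n, (2 * (x : ℝ) + 1) * (xi β x ^ 2 - xi β (x + 1) ^ 2) := by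
        rw [mul_sum]
        exact sum_congr rfl fun x _ => by rw [mul_left_comm β, ← xi_succ_eq hβ x]
    _ = β * (1 + 2 * ∑ x ∈ range n, xi β (x + 1) ^ 2 - (2 * n + 1) * xi β n ^ 2) := by
        rw [eq_sub_of_add_eq (sum_range_mul_sub_succ_add (fun x : ℕ => 2 * (x : ℝ) + 1)
          (fun x => xi β x ^ 2) n), mul_sum]
        simp only [Nat.cast_zero, Nat.cast_succ, xi_zero]
        ring_nf
    _ ≤ β * (2 * β + 1) := by
        have hsq_le : ∑ x ∈ range n, xi β (x + 1) ^ 2 ≤ ∑ x ∈ range n, xi β (x + 1) :=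
          sum_le_sum fun x _ => pow_le_of_le_one (xi_pos hβ _).le (xi_le_one hβ _) two_ne_zero
        have hlast : 0 ≤ (2 * (n : ℝ) + 1) * xi β n ^ 2 := by positivity
        have hsum := sum_range_xi_succ_le hβ n
        exact mul_le_mul_of_nonneg_left (by linarith) hβ.le

end

/-- Finite second moment: if `X̄_β^P` has distribution `π_β^P`, i.e.
`P(X̄_β^P = x) = ξ_β(x) − ξ_β(x+1)`, then
`E((X̄_β^P)²) = ∑_x x²(ξ_β(x) − ξ_β(x+1)) ≤ 2β(β+2)`. -/
theorem xi_second_moment_bound (β : ℝ) (hβ : 0 < β) :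
    Summable (fun x : ℕ => (x : ℝ) ^ 2 * (xi β x - xi β (x + 1))) ∧
      ∑' x : ℕ, (x : ℝ) ^ 2 * (xi β x - xi β (x + 1)) ≤ 2 * β * (β + 2) := by
  have hnonneg (x : ℕ) : 0 ≤ (x : ℝ) ^ 2 * (xi β x - xi β (x + 1)) :=
    mul_nonneg (sq_nonneg _) (sub_nonneg.2 (xi_succ_lt hβ x).le)
  have hpartial (n : ℕ) :
      ∑ x ∈ range n, (x : ℝ) ^ 2 * (xi β x - xi β (x + 1)) ≤ 2 * β * (β + 2) :=
    (sum_range_sq_mul_xi_sub_le hβ n).trans (by nlinarith)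
  have hsummable := summable_of_sum_range_le hnonneg hpartial
  exact ⟨hsummable, hsummable.tsum_le_of_sum_range_le hpartial⟩
end

section
/- Let X̄_β^P be a random variable with distribution π_β^P. As β → ∞, the law of X̄_β^P/β converges weakly (in distribution) to the uniform distribution on the interval [0, 2]. -/
open Filter MeasureTheory

lemma xi_nonneg {β : ℝ} (hβ : 0 < β) : ∀ x, 0 ≤ xi β x
  | 0 => by norm_num [xi]
  | x + 1 => by
    have harg : (0:ℝ) ≤ 1 + 4 * β ^ 2 * (xi β x) ^ 2 := by positivity
    have hs := Real.sq_sqrt harg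
    have hsn := Real.sqrt_nonneg (1 + 4 * β ^ 2 * (xi β x) ^ 2)
    have h2 : (1:ℝ) ≤ Real.sqrt (1 + 4 * β ^ 2 * (xi β x) ^ 2) := by
      nlinarith [sq_nonneg (xi β x)]
    show 0 ≤ (-1 + Real.sqrt (1 + 4 * β ^ 2 * (xi β x) ^ 2)) / (2 * β)
    apply div_nonneg (by linarith) (by linarith)

lemma xi_sq {β : ℝ} (hβ : 0 < β) (x : ℕ) :
    (xi β (x+1))^2 + xi β (x+1)/β = (xi β x)^2 := by
  have harg : (0:ℝ) ≤ 1 + 4 * β ^ 2 * (xi β x) ^ 2 := by positivity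
  have hs : (Real.sqrt (1 + 4 * β ^ 2 * (xi β x) ^ 2))^2
      = 1 + 4 * β ^ 2 * (xi β x) ^ 2 := Real.sq_sqrt harg
  show ((-1 + Real.sqrt (1 + 4 * β ^ 2 * (xi β x) ^ 2)) / (2 * β))^2
      + ((-1 + Real.sqrt (1 + 4 * β ^ 2 * (xi β x) ^ 2)) / (2 * β))/β = (xi β x)^2
  field_simp
  nlinarith [hs]

lemma step_le' {u v b : ℝ} (hb : 0 < b) (hu : 0 ≤ u) (hv : 0 ≤ v)
    (h : u^2 + u/b = v^2) : v - u ≤ 1/(2*b) := by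
  have h' : u^2*b + u = v^2*b := by
    field_simp at h; linarith
  by_contra hA
  push_neg at hA
  have hA' : 1 < (v-u)*(2*b) := (div_lt_iff₀ (by positivity)).mp hA
  have h1 : 0 < v - u := by nlinarith [hA', hb]
  have h2 : v + u ≤ (v-u)*(2*b)*(v+u) := by nlinarith [hA', hu, hv]
  nlinarith [h2, h', h1]

lemma succ_le' {u v b : ℝ} (hb : 0 < b) (hu : 0 ≤ u) (hv : 0 ≤ v)
    (h : u^2 + u/b = v^2) : u ≤ v := by
  have h' : u^2*b + u = v^2*b := by field_simp at h; linarith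
  by_contra hlt
  push_neg at hlt
  have h1 : 0 ≤ b*(u-v)*(u+v) :=
    mul_nonneg (mul_nonneg hb.le (by linarith)) (by linarith)
  nlinarith [h', h1, hu, hv, hlt]

lemma step_ge' {u v b : ℝ} (hb : 0 < b) (hu : 0 ≤ u) (hv0 : 0 < v)
    (h : u^2 + u/b = v^2) : 1/(2*b) - 1/(4*b^2*v) ≤ v - u := by
  have h' : u^2*b + u = v^2*b := by field_simp at h; linarith
  have hvle : 0 ≤ v := hv0.le
  have hcu : 2*b*v ≤ 2*b*u + 1 := by
    have h1 := step_le' hb hu hvle h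
    have h2 : 2*b*(v-u) ≤ 2*b*(1/(2*b)) := mul_le_mul_of_nonneg_left h1 (by positivity)
    have h3 : 2*b*(1/(2*b)) = 1 := by field_simp
    linarith
  have e : 1/(2*b) - 1/(4*b^2*v) = (2*b*v - 1)/(4*b^2*v) := by
    field_simp; ring
  rw [e, div_le_iff₀ (by positivity)]
  nlinarith [h', hcu, mul_nonneg hb.le hu, mul_nonneg hb.le hvle, hb,
    mul_nonneg (mul_nonneg hb.le hb.le) (mul_nonneg hu hvle)]

section
variable {β : ℝ} (hβ : 0 < β)
include hβ

lemma xi_succ_le (x : ℕ) : xi β (x+1) ≤ xi β x :=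
  succ_le' hβ (xi_nonneg hβ (x+1)) (xi_nonneg hβ x) (xi_sq hβ x)

lemma xi_anti : Antitone (xi β) :=
  antitone_nat_of_succ_le (xi_succ_le hβ)

lemma xi_step_le (x : ℕ) : xi β x - xi β (x+1) ≤ 1/(2*β) :=
  step_le' hβ (xi_nonneg hβ (x+1)) (xi_nonneg hβ x) (xi_sq hβ x)

lemma xi_ge (x : ℕ) : 1 - x/(2*β) ≤ xi β x := by
  induction x with
  | zero => simp [xi]
  | succ n ih =>
      have h := xi_step_le hβ n
      push_cast
      have : ((n:ℝ)+1)/(2*β) = (n:ℝ)/(2*β) + 1/(2*β) := by ring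
      rw [this]
      linarith

lemma xi_tendsto_zero : Tendsto (xi β) atTop (nhds 0) := by
  have hb : BddBelow (Set.range (xi β)) :=
    ⟨0, by rintro y ⟨x, rfl⟩; exact xi_nonneg hβ x⟩
  have ht := tendsto_atTop_ciInf (xi_anti hβ) hb
  set L := ⨅ n, xi β n with hL
  have hL0 : 0 ≤ L := le_ciInf fun x => xi_nonneg hβ x
  have ht1 : Tendsto (fun n => xi β (n+1)) atTop (nhds L) :=
    ht.comp (tendsto_add_atTop_nat 1)
  have ht2 : Tendsto (fun n => (xi β (n+1))^2 + xi β (n+1)/β) atTop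
      (nhds (L^2 + L/β)) := ((ht1.pow 2).add (ht1.div_const β))
  have ht3 : Tendsto (fun n => (xi β n)^2) atTop (nhds (L^2)) := ht.pow 2
  have heq : (fun n => (xi β (n+1))^2 + xi β (n+1)/β) = fun n => (xi β n)^2 := by
    funext n; exact xi_sq hβ n
  rw [heq] at ht2
  have : L^2 + L/β = L^2 := tendsto_nhds_unique ht2 ht3
  have hLz : L = 0 := by
    have : L/β = 0 := by linarith
    field_simp at this
    simpa using this
  rwa [hLz] at ht

lemma xi_hasSum (N : ℕ) :
    HasSum (fun x => xi β (x+N) - xi β (x+N+1)) (xi β N) := by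
  have hnn : ∀ x, 0 ≤ xi β (x+N) - xi β (x+N+1) := fun x => by
    linarith [xi_succ_le hβ (x+N)]
  have hps : ∀ n, ∑ i ∈ Finset.range n, (xi β (i+N) - xi β (i+N+1))
      = xi β N - xi β (n+N) := by
    intro n
    induction n with
    | zero => simp
    | succ m ih => rw [Finset.sum_range_succ, ih]; ring
  have hsum : Summable (fun x => xi β (x+N) - xi β (x+N+1)) := by
    apply summable_of_sum_range_le (c := xi β N) hnn
    intro n
    rw [hps n]
    linarith [xi_nonneg hβ (n+N)]
  rw [hsum.hasSum_iff_tendsto_nat]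
  simp_rw [hps]
  have : Tendsto (fun n => xi β (n+N)) atTop (nhds 0) :=
    (xi_tendsto_zero hβ).comp (tendsto_add_atTop_nat N)
  simpa using (tendsto_const_nhds (x := xi β N)).sub this

end


set_option maxHeartbeats 4000000 in
/-- Weak convergence of `X̄_β^P/β` to the uniform distribution on `[0,2]`:
for every bounded continuous `f : ℝ → ℝ`,
`E[f(X̄_β^P/β)] = ∑_x (ξ_β(x) − ξ_β(x+1)) f(x/β) → ∫_0^2 f(y) (1/2) dy` as `β → ∞`,
where `P(X̄_β^P = x) = ξ_β(x) − ξ_β(x+1)`. -/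
theorem power_of_choice_weak_convergence_to_uniform
    (f : BoundedContinuousFunction ℝ ℝ) :
    Filter.Tendsto
      (fun β : ℝ => ∑' x : ℕ, (xi β x - xi β (x + 1)) * f ((x : ℝ) / β))
      Filter.atTop
      (nhds (∫ y in Set.Icc (0 : ℝ) 2, f y / 2)) := by
  classical
  have hIcc : ∫ y in Set.Icc (0:ℝ) 2, f y / 2 = ∫ y in (0:ℝ)..2, f y / 2 := by
    rw [intervalIntegral.integral_of_le (by norm_num : (0:ℝ) ≤ 2),
      MeasureTheory.integral_Icc_eq_integral_Ioc]
  rw [hIcc, Metric.tendsto_atTop]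
  intro ε hε
  set M := ‖f‖ with hMdef
  have hM0 : 0 ≤ M := norm_nonneg f
  have hfb : ∀ y : ℝ, |f y| ≤ M := fun y => f.norm_coe_le_norm y
  set δ : ℝ := min (ε/(16*(M+1))) (1/2) with hδdef
  have hδ0 : 0 < δ := lt_min (by positivity) one_half_pos
  have hδhalf : δ ≤ 1/2 := min_le_right _ _
  have hδε : δ*(M+1) ≤ ε/16 := by
    calc δ*(M+1) ≤ (ε/(16*(M+1)))*(M+1) :=
          mul_le_mul_of_nonneg_right (min_le_left _ _) (by positivity)
    _ = ε/16 := by field_simp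
  -- uniform continuity on [-1,4]
  have huc := (isCompact_Icc (a := (-1:ℝ)) (b := 4)).uniformContinuousOn_of_continuous
    (f.continuous.continuousOn)
  rw [Metric.uniformContinuousOn_iff] at huc
  obtain ⟨η, hη0, hη⟩ := huc (ε/16) (by positivity)
  -- the threshold
  refine ⟨max (max 1 (2/δ + 1)) (max (2/η) (max (16*(M+1)/(ε*δ)) (8*(2/δ+1)*(M+1)/ε))),
    fun β hβB => ?_⟩
  simp only [ge_iff_le, max_le_iff] at hβB
  obtain ⟨⟨hβ1, hβδ⟩, hβη, hβe, hβf⟩ := hβB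
  have hβ0 : (0:ℝ) < β := lt_of_lt_of_le one_pos hβ1
  have hβδ1 : 1 ≤ β*δ := by
    have : (2/δ)*δ ≤ β*δ := mul_le_mul_of_nonneg_right (by linarith) hδ0.le
    have h2 : (2/δ)*δ = 2 := by field_simp
    linarith
  have hβδ2 : 2 ≤ β*δ := by
    have : (2/δ)*δ ≤ β*δ := mul_le_mul_of_nonneg_right (by linarith) hδ0.le
    have h2 : (2/δ)*δ = 2 := by field_simp
    linarith
  have hβinv : 1/β < η := by
    have h1 : 1/β ≤ η/2 := by
      rw [div_le_div_iff₀ hβ0 (by norm_num)]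
      have := mul_le_mul_of_nonneg_right hβη (le_of_lt hη0)
      have h2 : (2/η)*η = 2 := by field_simp
      nlinarith
    linarith
  -- N
  have hex : ∃ x, xi β x < δ := ((xi_tendsto_zero hβ0).eventually_lt_const hδ0).exists
  obtain ⟨N, hNlt, hNge⟩ : ∃ N, xi β N < δ ∧ ∀ x, x < N → δ ≤ xi β x :=
    ⟨Nat.find hex, Nat.find_spec hex, fun x hx => le_of_not_gt (Nat.find_min hex hx)⟩
  have hN1 : 0 < N := by
    rcases Nat.eq_zero_or_pos N with h | h
    · exfalso
      have := hNlt
      rw [h] at this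
      simp only [xi] at this
      linarith
    · exact h
  -- lower bound on N
  have hNlb : 2*β*(1-δ) < (N:ℝ) := by
    have h1 := xi_ge hβ0 N
    have h2 : 1 - (N:ℝ)/(2*β) < δ := lt_of_le_of_lt h1 hNlt
    have h3 : (1-δ) < (N:ℝ)/(2*β) := by linarith
    have h4 := (lt_div_iff₀ (by positivity : (0:ℝ) < 2*β)).mp h3
    linarith [h4]
  -- step lower bound below N
  have hstep : ∀ x, x < N → 1/(2*β) - 1/(4*β^2*δ) ≤ xi β x - xi β (x+1) := by
    intro x hx
    have h1 : δ ≤ xi β x := hNge x hx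
    have h2 := step_ge' hβ0 (xi_nonneg hβ0 (x+1)) (lt_of_lt_of_le hδ0 h1) (xi_sq hβ0 x)
    have h3 : 1/(4*β^2*(xi β x)) ≤ 1/(4*β^2*δ) := by
      apply one_div_le_one_div_of_le (by positivity)
      gcongr
    linarith
  -- upper bound on xi below N
  have hupper : ∀ x, x ≤ N → xi β x ≤ 1 - (x:ℝ)*(1/(2*β) - 1/(4*β^2*δ)) := by
    intro x
    induction x with
    | zero => intro _; simp [xi]
    | succ n ih =>
        intro h
        have hn : n < N := h
        have h1 := hstep n hn
        have h2 := ih (le_of_lt hn)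
        push_cast
        nlinarith [h1, h2]
  -- upper bound on N
  have hNub : (N:ℝ) ≤ 2*β*(1-δ) + 2/δ + 1 := by
    have h1 : δ ≤ xi β (N-1) := hNge _ (Nat.sub_lt hN1 one_pos)
    have h2 := hupper (N-1) (Nat.sub_le N 1)
    have hcast : ((N-1:ℕ):ℝ) = (N:ℝ) - 1 := by
      rw [Nat.cast_sub hN1]; norm_num
    rw [hcast] at h2
    have hq : (1/(2*β) - 1/(4*β^2*δ)) * (4*β^2*δ) = 2*β*δ - 1 := by
      field_simp; ring
    have hnc : ((N:ℝ)-1)*(1/(2*β) - 1/(4*β^2*δ)) ≤ 1-δ := by nlinarith [h1, h2]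
    have hnc2 : ((N:ℝ)-1)*(2*β*δ-1) ≤ (1-δ)*(4*β^2*δ) := by
      have hmul := mul_le_mul_of_nonneg_right hnc
        (show (0:ℝ) ≤ 4*β^2*δ by positivity)
      calc ((N:ℝ)-1)*(2*β*δ-1)
          = (((N:ℝ)-1)*(1/(2*β) - 1/(4*β^2*δ)))*(4*β^2*δ) := by rw [← hq]; ring
        _ ≤ (1-δ)*(4*β^2*δ) := hmul
    have hβδt3 : 2*β*δ*(2/δ) = 4*β := by field_simp; ring
    have h3 : (0:ℝ) < 2*β*δ-1 := by linarith [hβδ2]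
    by_contra hG
    push_neg at hG
    have h5 : (2*β*(1-δ)+2/δ)*(2*β*δ-1) < ((N:ℝ)-1)*(2*β*δ-1) :=
      mul_lt_mul_of_pos_right (by linarith) h3
    have ht0 : (0:ℝ) < 2/δ := by positivity
    have hbd0 : (0:ℝ) ≤ 2*β*δ := by positivity
    linarith [h5, hnc2, hβδt3, hβδ, ht0, hbd0]
  have hN4 : (N:ℝ) ≤ 4*β := by
    linarith [hNub, hβδ, mul_pos hβ0 hδ0, hβ0]
  -- probability weights
  set g : ℕ → ℝ := fun x => (xi β x - xi β (x+1)) * f ((x:ℝ)/β) with hgdef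
  have hp0 : ∀ x:ℕ, 0 ≤ xi β x - xi β (x+1) := fun x => by linarith [xi_succ_le hβ0 x]
  have hpsum : HasSum (fun x:ℕ => xi β x - xi β (x+1)) 1 := by
    have h := xi_hasSum hβ0 0
    simpa [xi] using h
  have hsummable : Summable g := by
    apply Summable.of_norm_bounded (g := fun x => (xi β x - xi β (x+1)) * M)
      (hpsum.summable.mul_right M)
    intro x
    rw [hgdef]
    simp only [Real.norm_eq_abs, abs_mul, abs_of_nonneg (hp0 x)]
    exact mul_le_mul_of_nonneg_left (hfb _) (hp0 x)
  have hsplit := Summable.sum_add_tsum_nat_add N hsummable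
  -- tail bound
  have htail_hs : HasSum (fun x:ℕ => xi β (x+N) - xi β (x+N+1)) (xi β N) :=
    xi_hasSum hβ0 N
  have hgtail : Summable (fun x => g (x+N)) := (summable_nat_add_iff N).mpr hsummable
  have hgtailabs : Summable (fun x => ‖g (x+N)‖) := hgtail.abs
  have htail_bd : |∑' x:ℕ, g (x+N)| ≤ δ * M := by
    have h1 : ‖∑' x:ℕ, g (x+N)‖ ≤ ∑' x:ℕ, ‖g (x+N)‖ :=
      norm_tsum_le_tsum_norm hgtailabs
    have h2 : ∑' x:ℕ, ‖g (x+N)‖ ≤ ∑' x:ℕ, (xi β (x+N) - xi β (x+N+1)) * M := by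
      apply Summable.tsum_le_tsum _ hgtailabs (htail_hs.summable.mul_right M)
      intro x
      rw [hgdef]
      simp only [Real.norm_eq_abs, abs_mul, abs_of_nonneg (hp0 (x+N))]
      exact mul_le_mul_of_nonneg_left (hfb _) (hp0 (x+N))
    have h3 : ∑' x:ℕ, (xi β (x+N) - xi β (x+N+1)) * M = xi β N * M :=
      (htail_hs.mul_right M).tsum_eq
    have h4 : xi β N * M ≤ δ * M := mul_le_mul_of_nonneg_right hNlt.le hM0
    rw [Real.norm_eq_abs] at h1
    linarith
  -- A vs B
  set A : ℝ := ∑ x ∈ Finset.range N, g x with hAdef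
  set B : ℝ := ∑ x ∈ Finset.range N, (1/(2*β)) * f ((x:ℝ)/β) with hBdef
  have hMβδ : M/(β*δ) ≤ ε/16 := by
    have h1 : 16*(M+1) ≤ β*(ε*δ) := (div_le_iff₀ (by positivity)).mp hβe
    rw [div_le_div_iff₀ (by positivity) (by norm_num : (0:ℝ) < 16)]
    nlinarith [h1]
  have hAB : |A - B| ≤ ε/16 := by
    have h1 : |A - B| ≤ ∑ x ∈ Finset.range N, |g x - (1/(2*β)) * f ((x:ℝ)/β)| := by
      rw [hAdef, hBdef, ← Finset.sum_sub_distrib]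
      exact Finset.abs_sum_le_sum_abs _ _
    have h2 : ∀ x ∈ Finset.range N, |g x - (1/(2*β)) * f ((x:ℝ)/β)|
        ≤ 1/(4*β^2*δ) * M := by
      intro x hx
      have hxN : x < N := Finset.mem_range.mp hx
      have he : g x - (1/(2*β)) * f ((x:ℝ)/β)
          = ((xi β x - xi β (x+1)) - 1/(2*β)) * f ((x:ℝ)/β) := by
        rw [hgdef]; ring
      rw [he, abs_mul]
      have habs : |(xi β x - xi β (x+1)) - 1/(2*β)| ≤ 1/(4*β^2*δ) := by
        rw [abs_le]
        constructor
        · linarith [hstep x hxN]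
        · have := xi_step_le hβ0 x
          have hpos : (0:ℝ) ≤ 1/(4*β^2*δ) := by positivity
          linarith
      exact mul_le_mul habs (hfb _) (abs_nonneg _) (by positivity)
    have h3 : ∑ x ∈ Finset.range N, |g x - (1/(2*β)) * f ((x:ℝ)/β)|
        ≤ (N:ℝ) * (1/(4*β^2*δ) * M) := by
      have hss := Finset.sum_le_sum h2
      rw [Finset.sum_const, Finset.card_range, nsmul_eq_mul] at hss
      exact hss
    have h4 : (N:ℝ) * (1/(4*β^2*δ) * M) ≤ 4*β * (1/(4*β^2*δ) * M) :=
      mul_le_mul_of_nonneg_right hN4 (by positivity)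
    have h5 : 4*β * (1/(4*β^2*δ) * M) = M/(β*δ) := by
      field_simp
    linarith
  -- B vs the integral up to T
  have hint : ∀ a b : ℝ, IntervalIntegrable (fun y => f y / 2) volume a b :=
    fun a b => (f.continuous.div_const 2).intervalIntegrable a b
  set T : ℝ := (N:ℝ)/β with hTdef
  have hadj : ∑ k ∈ Finset.range N,
      ∫ y in ((k:ℝ)/β)..(((k:ℝ)+1)/β), f y / 2 = ∫ y in (0:ℝ)..T, f y / 2 := by
    have h := intervalIntegral.sum_integral_adjacent_intervals
      (a := fun k : ℕ => (k:ℝ)/β) (μ := volume) (f := fun y => f y / 2)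
      (n := N) (fun k _ => hint _ _)
    simp only [Nat.cast_zero, Nat.cast_add, Nat.cast_one] at h
    rw [hTdef]
    convert h using 2
    norm_num
  have hterm : ∀ x, x < N →
      |(1/(2*β)) * f ((x:ℝ)/β) - ∫ y in ((x:ℝ)/β)..(((x:ℝ)+1)/β), f y / 2|
        ≤ ε/32 * (1/β) := by
    intro x hxN
    have hord : (x:ℝ)/β ≤ ((x:ℝ)+1)/β := by gcongr; linarith
    have hlen : ((x:ℝ)+1)/β - (x:ℝ)/β = 1/β := by field_simp; ring
    have hconst : ∫ _y in ((x:ℝ)/β)..(((x:ℝ)+1)/β), (f ((x:ℝ)/β) / 2)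
        = (1/β) * (f ((x:ℝ)/β) / 2) := by
      rw [intervalIntegral.integral_const, hlen, smul_eq_mul]
    have hdiff : (1/(2*β)) * f ((x:ℝ)/β)
          - ∫ y in ((x:ℝ)/β)..(((x:ℝ)+1)/β), f y / 2
        = ∫ y in ((x:ℝ)/β)..(((x:ℝ)+1)/β), (f ((x:ℝ)/β) / 2 - f y / 2) := by
      rw [intervalIntegral.integral_sub intervalIntegrable_const (hint _ _), hconst]
      field_simp
    rw [hdiff]
    have hxpts : ∀ z : ℝ, (x:ℝ)/β ≤ z → z ≤ ((x:ℝ)+1)/β → z ∈ Set.Icc (-1:ℝ) 4 := by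
      intro z h1 h2
      have hz0 : (0:ℝ) ≤ (x:ℝ)/β := by positivity
      have hxleN : (x:ℝ)+1 ≤ (N:ℝ) := by exact_mod_cast hxN
      have h3 : ((x:ℝ)+1)/β ≤ (N:ℝ)/β := by gcongr
      have hT4 : (N:ℝ)/β ≤ 4 := by
        rw [div_le_iff₀ hβ0]; linarith [hN4]
      exact ⟨by linarith, by linarith⟩
    have hbound : ∀ y ∈ Set.uIoc ((x:ℝ)/β) (((x:ℝ)+1)/β),
        ‖f ((x:ℝ)/β) / 2 - f y / 2‖ ≤ ε/32 := by
      intro y hy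
      rw [Set.uIoc_of_le hord] at hy
      obtain ⟨hy1, hy2⟩ := hy
      have hmem1 : (x:ℝ)/β ∈ Set.Icc (-1:ℝ) 4 := hxpts _ le_rfl hord
      have hmem2 : y ∈ Set.Icc (-1:ℝ) 4 := hxpts _ hy1.le hy2
      have hdist : dist ((x:ℝ)/β) y < η := by
        rw [Real.dist_eq, abs_sub_comm,
          abs_of_nonneg (by linarith : (0:ℝ) ≤ y - (x:ℝ)/β)]
        linarith [hβinv]
      have hfd := hη _ hmem1 _ hmem2 hdist
      rw [Real.dist_eq] at hfd
      rw [show (f ((x:ℝ)/β) / 2 - f y / 2) = (f ((x:ℝ)/β) - f y)/2 by ring,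
        Real.norm_eq_abs, abs_div, abs_two]
      linarith
    have hni := intervalIntegral.norm_integral_le_of_norm_le_const hbound
    rw [Real.norm_eq_abs, hlen] at hni
    calc |∫ y in ((x:ℝ)/β)..(((x:ℝ)+1)/β), (f ((x:ℝ)/β) / 2 - f y / 2)|
        ≤ ε/32 * |1/β| := hni
      _ = ε/32 * (1/β) := by rw [abs_of_pos (by positivity)]
  have hBT : |B - ∫ y in (0:ℝ)..T, f y / 2| ≤ ε/8 := by
    rw [← hadj, hBdef, ← Finset.sum_sub_distrib]
    refine (Finset.abs_sum_le_sum_abs _ _).trans ?_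
    have h3 : ∑ x ∈ Finset.range N,
        |(1/(2*β)) * f ((x:ℝ)/β) - ∫ y in ((x:ℝ)/β)..(((x:ℝ)+1)/β), f y / 2|
        ≤ (N:ℝ) * (ε/32 * (1/β)) := by
      have hss := Finset.sum_le_sum
        (fun x hx => hterm x (Finset.mem_range.mp hx))
      rw [Finset.sum_const, Finset.card_range, nsmul_eq_mul] at hss
      exact hss
    have h4 : (N:ℝ) * (ε/32 * (1/β)) ≤ 4*β * (ε/32 * (1/β)) :=
      mul_le_mul_of_nonneg_right hN4 (by positivity)
    have h5 : 4*β * (ε/32 * (1/β)) = ε/8 := by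
      field_simp; ring
    linarith
  -- integral up to T vs integral up to 2
  have hadd := intervalIntegral.integral_add_adjacent_intervals (hint 0 T) (hint T 2)
  have hT2 : |∫ y in T..(2:ℝ), f y / 2| ≤ (M/2) * |2 - T| := by
    have hb : ∀ y ∈ Set.uIoc T (2:ℝ), ‖f y / 2‖ ≤ M/2 := by
      intro y _
      rw [Real.norm_eq_abs, abs_div, abs_two]
      linarith [hfb y]
    have := intervalIntegral.norm_integral_le_of_norm_le_const hb
    rwa [Real.norm_eq_abs] at this
  have hTlb : 2*(1-δ) < T := by
    rw [hTdef, lt_div_iff₀ hβ0]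
    linarith [hNlb]
  have hTub : T ≤ 2*(1-δ) + (2/δ+1)/β := by
    rw [hTdef, div_le_iff₀ hβ0]
    have e : (2*(1-δ) + (2/δ+1)/β)*β = 2*β*(1-δ) + (2/δ+1) := by
      field_simp
    rw [e]
    linarith [hNub]
  have hq0 : (0:ℝ) ≤ (2/δ+1)/β := by positivity
  have habsT : |2 - T| ≤ 2*δ + (2/δ+1)/β := by
    rw [abs_le]
    constructor <;> [linarith [hTub]; linarith [hTlb]]
  have hTI : |(∫ y in (0:ℝ)..T, f y / 2) - ∫ y in (0:ℝ)..2, f y / 2| ≤ ε/16 + ε/16 := by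
    have h1 : (∫ y in (0:ℝ)..T, f y / 2) - ∫ y in (0:ℝ)..2, f y / 2
        = -(∫ y in T..(2:ℝ), f y / 2) := by
      rw [← hadd]; ring
    rw [h1, abs_neg]
    have h2 : |∫ y in T..(2:ℝ), f y / 2| ≤ (M/2) * (2*δ + (2/δ+1)/β) := by
      refine hT2.trans ?_
      exact mul_le_mul_of_nonneg_left habsT (by positivity)
    have h3 : (M/2) * (2*δ) ≤ ε/16 := by nlinarith [hδε, hδ0, hM0]
    have h4 : (M/2) * ((2/δ+1)/β) ≤ ε/16 := by
      have h1' : 8*(2/δ+1)*(M+1) ≤ β*ε := (div_le_iff₀ hε).mp hβf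
      have ht0 : (0:ℝ) < 2/δ+1 := by positivity
      have heq : (M/2) * ((2/δ+1)/β) = (M*(2/δ+1))/(2*β) := by ring
      rw [heq, div_le_div_iff₀ (by positivity) (by norm_num : (0:ℝ) < 16)]
      nlinarith [h1', ht0, hM0]
    nlinarith [h2, h3, h4, hM0, hδ0, hq0]
  -- assemble
  rw [Real.dist_eq]
  have hdecomp : tsum g - ∫ y in (0:ℝ)..2, f y / 2
      = (A - B) + (B - ∫ y in (0:ℝ)..T, f y / 2)
        + ((∫ y in (0:ℝ)..T, f y / 2) - ∫ y in (0:ℝ)..2, f y / 2)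
        + (∑' x:ℕ, g (x+N)) := by
    rw [← hsplit, hAdef]; ring
  rw [hdecomp]
  have htail_bd' : |∑' x:ℕ, g (x+N)| ≤ ε/16 := by
    refine htail_bd.trans ?_
    nlinarith [hδε, hδ0, hM0]
  calc |(A - B) + (B - ∫ y in (0:ℝ)..T, f y / 2)
        + ((∫ y in (0:ℝ)..T, f y / 2) - ∫ y in (0:ℝ)..2, f y / 2)
        + (∑' x:ℕ, g (x+N))|
      ≤ |(A - B) + (B - ∫ y in (0:ℝ)..T, f y / 2)
        + ((∫ y in (0:ℝ)..T, f y / 2) - ∫ y in (0:ℝ)..2, f y / 2)|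
        + |∑' x:ℕ, g (x+N)| := abs_add_le _ _
    _ ≤ |(A - B) + (B - ∫ y in (0:ℝ)..T, f y / 2)|
        + |(∫ y in (0:ℝ)..T, f y / 2) - ∫ y in (0:ℝ)..2, f y / 2|
        + |∑' x:ℕ, g (x+N)| := by gcongr; exact abs_add_le _ _
    _ ≤ |A - B| + |B - ∫ y in (0:ℝ)..T, f y / 2|
        + |(∫ y in (0:ℝ)..T, f y / 2) - ∫ y in (0:ℝ)..2, f y / 2|
        + |∑' x:ℕ, g (x+N)| := by gcongr; exact abs_add_le _ _
    _ < ε := by linarith [hAB, hBT, hTI, htail_bd', hε]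
end
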